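/- For every formula A ⊆ M and every finite set Δ of formulas whose set of possible approximate models ⟦Δ⟧_pam is nonempty (no assumption on the support of p), the conditional probability converges as μ → 1 from below: lim_{μ→1⁻} P_μ(A | Δ) = (∑_{m ∈ ⟦Δ⟧_pam ∩ ⟦A⟧_p} p m) / (∑_{m ∈ ⟦Δ⟧_pam} p m). -/

import Mathlib

open Classical

noncomputable section

variable {M : Type*}

/-- Likelihood of a formula (a set of models) in a model. -/
noncomputable def ell (μ : ℝ) (B : Set M) (m : M) : ℝ :=
  if m ∈ B then μ else 1 - μ

/-- Joint likelihood of a finite set of formulas in a model. -/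
noncomputable def ellS (μ : ℝ) (Δ : Finset (Set M)) (m : M) : ℝ :=
  ∏ B ∈ Δ, ell μ B m

/-- Conditional probability P_μ(A | Δ) of the generative logic model. -/
noncomputable def condP [Fintype M] (p : M → ℝ) (μ : ℝ) (A : Set M)
    (Δ : Finset (Set M)) : ℝ :=
  (∑ m, ell μ A m * ellS μ Δ m * p m) / (∑ m, ellS μ Δ m * p m)

/-- Models of a finite set of formulas. -/
def Mdl (Δ : Finset (Set M)) : Set M := {m | ∀ B ∈ Δ, m ∈ B}

/-- Possible models of a finite set of formulas. -/
def PMod (p : M → ℝ) (Δ : Finset (Set M)) : Set M :=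
  {m | (∀ B ∈ Δ, m ∈ B) ∧ p m ≠ 0}

/-- Possible models of a single formula. -/
def PModA (p : M → ℝ) (A : Set M) : Set M := {m | m ∈ A ∧ p m ≠ 0}

/-- S is a maximal consistent subset of Δ. -/
def IsMaxConsistent (Δ S : Finset (Set M)) : Prop :=
  S ⊆ Δ ∧ Mdl S ≠ ∅ ∧ ∀ B ∈ Δ \ S, Mdl (insert B S) = ∅

/-- Cardinality-maximal consistent subsets of Δ. -/
def MCS (Δ : Finset (Set M)) : Set (Finset (Set M)) :=
  {S | IsMaxConsistent Δ S ∧ ∀ S', IsMaxConsistent Δ S' → S'.card ≤ S.card}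

/-- Approximate models of Δ. -/
def AMod (Δ : Finset (Set M)) : Set M := ⋃ S ∈ MCS Δ, Mdl S

/-- S is a maximal possible subset of Δ (w.r.t. p). -/
def IsMaxPossible (p : M → ℝ) (Δ S : Finset (Set M)) : Prop :=
  S ⊆ Δ ∧ PMod p S ≠ ∅ ∧ ∀ B ∈ Δ \ S, PMod p (insert B S) = ∅

/-- Cardinality-maximal possible subsets of Δ. -/
def MPS (p : M → ℝ) (Δ : Finset (Set M)) : Set (Finset (Set M)) :=
  {S | IsMaxPossible p Δ S ∧ ∀ S', IsMaxPossible p Δ S' → S'.card ≤ S.card}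

/-- Possible approximate models of Δ. -/
def PAMod (p : M → ℝ) (Δ : Finset (Set M)) : Set M := ⋃ S ∈ MPS p Δ, PMod p S

/-!
A model `m` satisfying `k` of the `n` formulas of `Δ` has likelihood `μ ^ k * (1 - μ) ^ (n - k)`.
If `K` is the largest such `k` among possible models, dividing every likelihood by
`μ ^ K * (1 - μ) ^ (n - K)` leaves the weight `((1 - μ) / μ) ^ (K - k)`, which is continuous at
`μ = 1` with value `1` if `k = K` and `0` otherwise. So the limit is the conditional probability
given the possible models satisfying `K` formulas, and these are exactly the possible approximate
models: every possible subset of `Δ` lies in the set of formulas true in one of its possible models.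
-/

open Finset Filter Topology

lemma ellS_eq_pow_mul_pow (μ : ℝ) (Δ : Finset (Set M)) (m : M) :
    ellS μ Δ m = μ ^ #{B ∈ Δ | m ∈ B} * (1 - μ) ^ (#Δ - #{B ∈ Δ | m ∈ B}) := by
  rw [ellS, ← card_filter_add_card_filter_not (s := Δ) (fun B => m ∈ B), Nat.add_sub_cancel_left]
  simp only [ell, prod_ite, prod_const]

lemma pow_mul_one_sub_pow_eq {μ : ℝ} (hμ : μ ≠ 0) {k K n : ℕ} (hkK : k ≤ K) (hKn : K ≤ n) :
    μ ^ k * (1 - μ) ^ (n - k) = μ ^ K * (1 - μ) ^ (n - K) * ((1 - μ) / μ) ^ (K - k) := by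
  obtain ⟨j, rfl⟩ := Nat.exists_eq_add_of_le hkK
  rw [Nat.add_sub_cancel_left, div_pow, show n - k = n - (k + j) + j by omega, pow_add, pow_add]
  field_simp

section MaxSat

variable {p : M → ℝ} {Δ S : Finset (Set M)} {m : M}

lemma subset_filter_mem_of_mem_PMod (hS : S ⊆ Δ) (hm : m ∈ PMod p S) :
    S ⊆ {B ∈ Δ | m ∈ B} :=
  fun B hB => mem_filter.mpr ⟨hS hB, hm.1 B hB⟩

lemma mem_PMod_filter_mem (hm : p m ≠ 0) : m ∈ PMod p {B ∈ Δ | m ∈ B} :=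
  ⟨fun _ hB => (mem_filter.mp hB).2, hm⟩

variable [Fintype M]

/-- The largest number of formulas of `Δ` satisfied by a possible model (`0` if there is none). -/
def maxSat (p : M → ℝ) (Δ : Finset (Set M)) : ℕ :=
  univ.filter (p · ≠ 0) |>.sup fun m => #{B ∈ Δ | m ∈ B}

lemma maxSat_le_card : maxSat p Δ ≤ #Δ :=
  Finset.sup_le fun _ _ => card_filter_le _ _

lemma card_filter_mem_le_maxSat (hm : p m ≠ 0) : #{B ∈ Δ | m ∈ B} ≤ maxSat p Δ :=
  le_sup (f := fun m => #{B ∈ Δ | m ∈ B}) (by simpa using hm)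

lemma exists_card_filter_mem_eq_maxSat (hp : ∃ m, p m ≠ 0) :
    ∃ m, p m ≠ 0 ∧ #{B ∈ Δ | m ∈ B} = maxSat p Δ := by
  obtain ⟨m, hm, hmax⟩ := exists_mem_eq_sup (univ.filter (p · ≠ 0))
    (by simpa [Finset.Nonempty] using hp) fun m => #{B ∈ Δ | m ∈ B}
  exact ⟨m, (mem_filter.mp hm).2, hmax.symm⟩

lemma card_le_maxSat_of_mem_PMod (hS : S ⊆ Δ) (hm : m ∈ PMod p S) : #S ≤ maxSat p Δ :=
  (card_le_card (subset_filter_mem_of_mem_PMod hS hm)).trans (card_filter_mem_le_maxSat hm.2)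

lemma IsMaxPossible.card_le_maxSat (hS : IsMaxPossible p Δ S) : #S ≤ maxSat p Δ := by
  obtain ⟨m, hm⟩ := Set.nonempty_iff_ne_empty.mpr hS.2.1
  exact card_le_maxSat_of_mem_PMod hS.1 hm

lemma isMaxPossible_filter_mem (hm : p m ≠ 0) (hmax : #{B ∈ Δ | m ∈ B} = maxSat p Δ) :
    IsMaxPossible p Δ {B ∈ Δ | m ∈ B} := by
  refine ⟨filter_subset _ _, Set.nonempty_iff_ne_empty.mp ⟨m, mem_PMod_filter_mem hm⟩, ?_⟩
  intro B hB
  replace hB := mem_sdiff.mp hB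
  by_contra hne
  obtain ⟨m', hm'⟩ := Set.nonempty_iff_ne_empty.mpr hne
  have hcard := card_le_maxSat_of_mem_PMod (insert_subset hB.1 (filter_subset _ _)) hm'
  rw [card_insert_of_notMem hB.2] at hcard
  omega

lemma mem_MPS_filter_mem (hm : p m ≠ 0) (hmax : #{B ∈ Δ | m ∈ B} = maxSat p Δ) :
    {B ∈ Δ | m ∈ B} ∈ MPS p Δ :=
  ⟨isMaxPossible_filter_mem hm hmax, fun _ hS' => hmax ▸ hS'.card_le_maxSat⟩

lemma mem_PAMod_iff (hp : ∃ m, p m ≠ 0) :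
    m ∈ PAMod p Δ ↔ p m ≠ 0 ∧ #{B ∈ Δ | m ∈ B} = maxSat p Δ := by
  simp only [PAMod, Set.mem_iUnion]
  constructor
  · rintro ⟨S, ⟨hS, hSmax⟩, hm⟩
    obtain ⟨m₀, hm₀, hm₀max⟩ := exists_card_filter_mem_eq_maxSat (Δ := Δ) hp
    have hK : maxSat p Δ ≤ #S := hm₀max ▸ hSmax _ (isMaxPossible_filter_mem hm₀ hm₀max)
    have hSm := card_le_card (subset_filter_mem_of_mem_PMod hS.1 hm)
    exact ⟨hm.2, le_antisymm (card_filter_mem_le_maxSat hm.2) (hK.trans hSm)⟩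
  · rintro ⟨hm, hmax⟩
    exact ⟨_, mem_MPS_filter_mem hm hmax, mem_PMod_filter_mem hm⟩

end MaxSat

lemma ne_zero_of_mem_PAMod {p : M → ℝ} {Δ : Finset (Set M)} {m : M} (hm : m ∈ PAMod p Δ) :
    p m ≠ 0 := by
  obtain ⟨S, -, hS⟩ := Set.mem_iUnion₂.mp hm
  exact hS.2

lemma continuous_ell (B : Set M) (m : M) : Continuous fun μ => ell μ B m := by
  unfold ell
  split_ifs <;> fun_prop

section Limit

variable [Fintype M] (p : M → ℝ) (Δ : Finset (Set M)) (A : Set M)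

/-- The likelihood of `m` divided by that of a model satisfying `maxSat p Δ` formulas. -/
def relWeight (μ : ℝ) (m : M) : ℝ := ((1 - μ) / μ) ^ (maxSat p Δ - #{B ∈ Δ | m ∈ B})

def weightedCondP (μ : ℝ) : ℝ :=
  (∑ m, ell μ A m * relWeight p Δ μ m * p m) / ∑ m, relWeight p Δ μ m * p m

lemma condP_eq_weightedCondP {μ : ℝ} (hμ₀ : μ ≠ 0) (hμ₁ : μ ≠ 1) :
    condP p μ A Δ = weightedCondP p Δ A μ := by
  set c := μ ^ maxSat p Δ * (1 - μ) ^ (#Δ - maxSat p Δ)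
  have hc : c ≠ 0 := mul_ne_zero (pow_ne_zero _ hμ₀) (pow_ne_zero _ (sub_ne_zero.mpr hμ₁.symm))
  -- for impossible models the factorization may fail, but both sides vanish
  have hfactor : ∀ m, ellS μ Δ m * p m = c * (relWeight p Δ μ m * p m) := by
    intro m
    by_cases hm : p m = 0
    · simp [hm]
    rw [ellS_eq_pow_mul_pow, pow_mul_one_sub_pow_eq hμ₀ (card_filter_mem_le_maxSat hm)
      maxSat_le_card, relWeight]
    ring
  simp only [condP, weightedCondP, mul_assoc (ell μ A _), hfactor, mul_left_comm _ c,
    ← mul_sum]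
  exact mul_div_mul_left _ _ hc

lemma continuousAt_weightedCondP (h : ∑ m, relWeight p Δ 1 m * p m ≠ 0) :
    ContinuousAt (weightedCondP p Δ A) 1 := by
  have hw : ∀ m, ContinuousAt (relWeight p Δ · m) 1 := fun m => by
    unfold relWeight
    fun_prop (disch := norm_num)
  exact .div
    (tendsto_finsetSum _ fun m _ => ((continuous_ell A m).continuousAt.mul (hw m)).mul_const _)
    (tendsto_finsetSum _ fun m _ => (hw m).mul_const _) h

lemma tendsto_condP_nhdsNE_one (h : ∑ m, relWeight p Δ 1 m * p m ≠ 0) :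
    Tendsto (condP p · A Δ) (𝓝[≠] 1) (𝓝 (weightedCondP p Δ A 1)) := by
  refine ((continuousAt_weightedCondP p Δ A h).tendsto.mono_left nhdsWithin_le_nhds).congr' ?_
  filter_upwards [(eventually_ne_nhds one_ne_zero).filter_mono nhdsWithin_le_nhds,
    self_mem_nhdsWithin] with μ hμ₀ hμ₁
  exact (condP_eq_weightedCondP p Δ A hμ₀ hμ₁).symm

variable {p Δ}

lemma relWeight_one_mul (hp : ∃ m, p m ≠ 0) (m : M) :
    relWeight p Δ 1 m * p m = if m ∈ PAMod p Δ then p m else 0 := by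
  by_cases hm : p m = 0
  · simp [hm]
  have hle := card_filter_mem_le_maxSat (Δ := Δ) hm
  rw [mem_PAMod_iff hp, relWeight, sub_self, zero_div]
  by_cases hmax : #{B ∈ Δ | m ∈ B} = maxSat p Δ
  · simp [hm, hmax]
  · simp [hm, hmax, zero_pow (Nat.sub_ne_zero_of_lt (lt_of_le_of_ne hle hmax))]

lemma sum_relWeight_one_mul (hp : ∃ m, p m ≠ 0) :
    ∑ m, relWeight p Δ 1 m * p m = ∑ m ∈ univ.filter (· ∈ PAMod p Δ), p m := by
  simp only [relWeight_one_mul hp, sum_filter]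

lemma sum_ell_one_mul_relWeight_one_mul (hp : ∃ m, p m ≠ 0) :
    ∑ m, ell 1 A m * relWeight p Δ 1 m * p m =
      ∑ m ∈ univ.filter (· ∈ PAMod p Δ ∩ PModA p A), p m := by
  simp only [mul_assoc, relWeight_one_mul hp, sum_filter, ell, sub_self, Set.mem_inter_iff, PModA,
    Set.mem_ofPred_eq]
  refine sum_congr rfl fun m _ => ?_
  split_ifs <;> simp_all

end Limit

theorem stmt_13_general [Fintype M] (p : M → ℝ)
    (hp : ∀ m, 0 ≤ p m)
    (A : Set M) (Δ : Finset (Set M)) (h : PAMod p Δ ≠ ∅) :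
    Filter.Tendsto (fun μ => condP p μ A Δ)
      (nhdsWithin 1 (Set.Ico (0 : ℝ) 1))
      (nhds ((∑ m ∈ Finset.univ.filter
                (fun m => m ∈ PAMod p Δ ∩ PModA p A), p m) /
             (∑ m ∈ Finset.univ.filter (fun m => m ∈ PAMod p Δ), p m))) := by
  obtain ⟨m₀, hm₀⟩ := Set.nonempty_iff_ne_empty.mpr h
  have hpm₀ := ne_zero_of_mem_PAMod hm₀
  have hsupp : ∃ m, p m ≠ 0 := ⟨m₀, hpm₀⟩
  have hden : ∑ m ∈ univ.filter (· ∈ PAMod p Δ), p m ≠ 0 :=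
    (sum_pos' (fun m _ => hp m) ⟨m₀, by simpa using hm₀, (hp m₀).lt_of_ne' hpm₀⟩).ne'
  rw [← sum_relWeight_one_mul hsupp] at hden ⊢
  rw [← sum_ell_one_mul_relWeight_one_mul A hsupp]
  exact (tendsto_condP_nhdsNE_one p Δ A hden).mono_left
    (nhdsWithin_mono 1 fun μ hμ => hμ.2.ne)

/-- as μ → 1⁻ the conditional probability converges to
conditioning on the possible approximate models of Δ. -/
theorem stmt_13 [Fintype M] [Nonempty M] (p : M → ℝ)
    (hp : ∀ m, 0 ≤ p m) (hps : ∑ m, p m = 1)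
    (A : Set M) (Δ : Finset (Set M)) (h : PAMod p Δ ≠ ∅) :
    Filter.Tendsto (fun μ => condP p μ A Δ)
      (nhdsWithin 1 (Set.Ico (0 : ℝ) 1))
      (nhds ((∑ m ∈ Finset.univ.filter
                (fun m => m ∈ PAMod p Δ ∩ PModA p A), p m) /
             (∑ m ∈ Finset.univ.filter (fun m => m ∈ PAMod p Δ), p m))) :=
  stmt_13_general p hp A Δ h
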